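/- Let B be an m×m complex matrix and c, d ∈ ℂ. Let λ↑ be the least singular value of B + cI and λ↓ the least singular value of B − cI, and let O be the 2m×2m block matrix [[B + cI, 0],[dI, B − cI]]. Then the least singular value σ_min(O) satisfies σ_min(O)² · (λ↑² + λ↓² + |d|²) ≥ λ↑² · λ↓². In particular, if λ↑, λ↓ > 0 and the ground state energy of O†O is small, σ_min(O) ≥ λ↑λ↓/√(λ↑² + λ↓² + |d|²). -/

import Mathlib

open scoped BigOperators

/-- The least singular value of a complex square matrix: the infimum over unit vectors `x`
of `‖M x‖`, with `M` acting on Euclidean space. -/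
noncomputable def leastSingularValue {k : Type*} [Fintype k] [DecidableEq k]
    (M : Matrix k k ℂ) : ℝ :=
  sInf {r : ℝ | ∃ x : EuclideanSpace ℂ k, ‖x‖ = 1 ∧ r = ‖Matrix.toEuclideanCLM (𝕜 := ℂ) M x‖}

/-!
Take a unit vector `z = (x, y)` at which `‖O z‖` attains `σ_min(O)`. Then
`‖O z‖² = ‖A x‖² + ‖C x + D y‖²` with `‖A x‖ ≥ σ(A) ‖x‖` and `‖C x + D y‖ ≥ σ(D) ‖y‖ - K ‖x‖`,
where `A = B + c`, `C = d`, `D = B - c` and `K = |d|` bounds `C`. Since `‖x‖² + ‖y‖² = 1`,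
eliminating `‖x‖, ‖y‖` by Cauchy–Schwarz gives `σ(A)² σ(D)² ≤ σ_min(O)² (σ(A)² + σ(D)² + K²)`.
-/

open Matrix WithLp

lemma sq_mul_sq_le_of_le_of_le {a b u v l₁ l₂ K : ℝ} (ha : 0 ≤ a) (hb : 0 ≤ b)
    (hl₁ : 0 ≤ l₁) (hl₂ : 0 ≤ l₂) (hK : 0 ≤ K) (hab : a ^ 2 + b ^ 2 = 1)
    (hu : l₁ * a ≤ u) (hv : l₂ * b ≤ v + K * a) :
    l₁ ^ 2 * l₂ ^ 2 ≤ (u ^ 2 + v ^ 2) * (l₁ ^ 2 + l₂ ^ 2 + K ^ 2) := by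
  have hfst : (l₂ * (l₁ * a)) ^ 2 ≤ l₂ ^ 2 * u ^ 2 := by
    rw [mul_pow]; gcongr
  have hsnd : (l₁ * l₂ * b) ^ 2 ≤ (l₁ * v + K * u) ^ 2 := by
    gcongr
    nlinarith [mul_le_mul_of_nonneg_left hv hl₁, mul_le_mul_of_nonneg_left hu hK]
  have cauchySchwarz : (l₁ * v + K * u) ^ 2 ≤ (l₁ ^ 2 + K ^ 2) * (u ^ 2 + v ^ 2) := by
    nlinarith [sq_nonneg (l₁ * u - K * v)]
  calc l₁ ^ 2 * l₂ ^ 2 = (l₂ * (l₁ * a)) ^ 2 + (l₁ * l₂ * b) ^ 2 := by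
        linear_combination (-(l₁ ^ 2 * l₂ ^ 2)) * hab
    _ ≤ (u ^ 2 + v ^ 2) * (l₁ ^ 2 + l₂ ^ 2 + K ^ 2) := by nlinarith [sq_nonneg v]

section leastSingularValue

variable {k : Type*} [Fintype k] [DecidableEq k]

lemma leastSingularValue_nonneg (M : Matrix k k ℂ) : 0 ≤ leastSingularValue M :=
  Real.sInf_nonneg <| by rintro r ⟨x, -, rfl⟩; positivity

lemma leastSingularValue_of_isEmpty [IsEmpty k] (M : Matrix k k ℂ) :
    leastSingularValue M = 0 := by
  have : ∀ x : EuclideanSpace ℂ k, ‖x‖ ≠ 1 := fun x => by simp [Subsingleton.elim x 0]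
  simp [leastSingularValue, this]

lemma leastSingularValue_le {M : Matrix k k ℂ} {x : EuclideanSpace ℂ k} (hx : ‖x‖ = 1) :
    leastSingularValue M ≤ ‖toEuclideanCLM (𝕜 := ℂ) M x‖ :=
  csInf_le ⟨0, by rintro r ⟨y, -, rfl⟩; positivity⟩ ⟨x, hx, rfl⟩

lemma leastSingularValue_mul_norm_le (M : Matrix k k ℂ) (x : EuclideanSpace ℂ k) :
    leastSingularValue M * ‖x‖ ≤ ‖toEuclideanCLM (𝕜 := ℂ) M x‖ := by
  rcases eq_or_ne x 0 with rfl | hx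
  · simp
  have hx' : 0 < ‖x‖ := norm_pos_iff.mpr hx
  have hunit : ‖(‖x‖⁻¹ : ℂ) • x‖ = 1 := by
    rw [norm_smul, norm_inv, Complex.norm_real, Real.norm_of_nonneg hx'.le, inv_mul_cancel₀ hx'.ne']
  have hle := leastSingularValue_le (M := M) hunit
  rw [map_smul, norm_smul, norm_inv, Complex.norm_real, Real.norm_of_nonneg hx'.le,
    le_inv_mul_iff₀ hx'] at hle
  linarith

lemma exists_norm_eq_leastSingularValue [Nonempty k] (M : Matrix k k ℂ) :
    ∃ x : EuclideanSpace ℂ k, ‖x‖ = 1 ∧ ‖toEuclideanCLM (𝕜 := ℂ) M x‖ = leastSingularValue M := by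
  obtain ⟨x, hx, hmin⟩ := (isCompact_sphere (0 : EuclideanSpace ℂ k) 1).exists_isMinOn
    (NormedSpace.sphere_nonempty.mpr zero_le_one)
    (toEuclideanCLM (𝕜 := ℂ) M).continuous.norm.continuousOn
  rw [mem_sphere_zero_iff_norm] at hx
  refine ⟨x, hx, le_antisymm (le_csInf ⟨_, x, hx, rfl⟩ ?_) (leastSingularValue_le hx)⟩
  rintro r ⟨y, hy, rfl⟩
  exact hmin (mem_sphere_zero_iff_norm.mpr hy)

end leastSingularValue

section blocks

variable {α β : Type*} [Fintype α] [Fintype β]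

lemma EuclideanSpace.norm_sq_sum {𝕜 : Type*} [RCLike 𝕜] (z : EuclideanSpace 𝕜 (α ⊕ β)) :
    ‖z‖ ^ 2 = ‖toLp 2 (ofLp z ∘ Sum.inl)‖ ^ 2 + ‖toLp 2 (ofLp z ∘ Sum.inr)‖ ^ 2 := by
  simp [EuclideanSpace.norm_sq_eq, Fintype.sum_sum_type]

variable [DecidableEq α] [DecidableEq β]

lemma norm_sq_toEuclideanCLM_fromBlocks (A : Matrix α α ℂ) (C : Matrix β α ℂ)
    (D : Matrix β β ℂ) (z : EuclideanSpace ℂ (α ⊕ β)) :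
    ‖toEuclideanCLM (𝕜 := ℂ) (fromBlocks A 0 C D) z‖ ^ 2 =
      ‖toEuclideanCLM (𝕜 := ℂ) A (toLp 2 (ofLp z ∘ Sum.inl))‖ ^ 2 +
        ‖toEuclideanLin C (toLp 2 (ofLp z ∘ Sum.inl)) +
          toEuclideanCLM (𝕜 := ℂ) D (toLp 2 (ofLp z ∘ Sum.inr))‖ ^ 2 := by
  rw [EuclideanSpace.norm_sq_sum]
  have hz : ofLp z = Sum.elim (ofLp z ∘ Sum.inl) (ofLp z ∘ Sum.inr) := by
    ext (i | j) <;> rfl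
  simp only [ofLp_toEuclideanCLM]
  rw [hz, fromBlocks_mulVec]
  simp

theorem sq_mul_sq_le_leastSingularValue_fromBlocks_sq_mul (A : Matrix α α ℂ)
    (C : Matrix β α ℂ) (D : Matrix β β ℂ) {K : ℝ} (hK : 0 ≤ K)
    (hC : ∀ x, ‖toEuclideanLin C x‖ ≤ K * ‖x‖) :
    leastSingularValue A ^ 2 * leastSingularValue D ^ 2 ≤
      leastSingularValue (fromBlocks A 0 C D) ^ 2 *
        (leastSingularValue A ^ 2 + leastSingularValue D ^ 2 + K ^ 2) := by
  cases isEmpty_or_nonempty α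
  · rw [leastSingularValue_of_isEmpty A, zero_pow two_ne_zero, zero_mul]
    positivity
  obtain ⟨z, hz, hmin⟩ := exists_norm_eq_leastSingularValue (fromBlocks A 0 C D)
  set x : EuclideanSpace ℂ α := toLp 2 (ofLp z ∘ Sum.inl)
  set y : EuclideanSpace ℂ β := toLp 2 (ofLp z ∘ Sum.inr)
  have hxy : ‖x‖ ^ 2 + ‖y‖ ^ 2 = 1 := by
    rw [← EuclideanSpace.norm_sq_sum, hz, one_pow]
  have hy : leastSingularValue D * ‖y‖ ≤
      ‖toEuclideanLin C x + toEuclideanCLM (𝕜 := ℂ) D y‖ + K * ‖x‖ :=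
    calc leastSingularValue D * ‖y‖ ≤ ‖toEuclideanCLM (𝕜 := ℂ) D y‖ :=
          leastSingularValue_mul_norm_le D y
      _ ≤ ‖toEuclideanLin C x + toEuclideanCLM (𝕜 := ℂ) D y‖ + ‖toEuclideanLin C x‖ :=
          norm_le_add_norm_add' _ _
      _ ≤ _ := by gcongr; exact hC x
  rw [← hmin, norm_sq_toEuclideanCLM_fromBlocks]
  exact sq_mul_sq_le_of_le_of_le (norm_nonneg x) (norm_nonneg y)
    (leastSingularValue_nonneg A) (leastSingularValue_nonneg D) hK hxy
    (leastSingularValue_mul_norm_le A x) hy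

end blocks

theorem stmt16 (m : ℕ) (B : Matrix (Fin m) (Fin m) ℂ) (c d : ℂ) :
    let O : Matrix (Fin m ⊕ Fin m) (Fin m ⊕ Fin m) ℂ :=
      Matrix.fromBlocks (B + c • 1) 0 (d • 1) (B - c • 1)
    leastSingularValue O ^ 2
        * (leastSingularValue (B + c • 1) ^ 2 + leastSingularValue (B - c • 1) ^ 2
            + ‖d‖ ^ 2)
      ≥ leastSingularValue (B + c • 1) ^ 2 * leastSingularValue (B - c • 1) ^ 2 :=
  sq_mul_sq_le_leastSingularValue_fromBlocks_sq_mul _ _ _ (norm_nonneg d)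
    fun x => by simp [norm_smul]
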